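/- arXiv:1309.3694 — 4 statements merged into one kernel-verified Lean document; each statement's English description precedes it below -/
import Mathlib

section
/- Let E be a Banach space and let s ∈ L(E) be invertible. Define α : L(E) → L(E) by α(a) = s a s⁻¹. Then the operator norm of α equals ‖s‖ · ‖s⁻¹‖. -/
/-!
The bound `‖α‖ ≤ ‖s‖ ‖s⁻¹‖` is submultiplicativity of the operator norm. For the reverse bound,
test `α` on rank-one operators `f ⊗ y`: they are mapped to `(f ∘ s⁻¹) ⊗ s y`, so choosing by
Hahn–Banach a norming functional `f` for `s⁻¹ x` gives `‖s⁻¹ x‖ ‖s y‖ ≤ ‖α‖ ‖x‖ ‖y‖` for all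
`x, y`, and taking suprema in `x` and `y` yields `‖s⁻¹‖ ‖s‖ ≤ ‖α‖`.
-/

namespace ContinuousLinearMap

section

variable {𝕜 E F G H : Type*} [NontriviallyNormedField 𝕜]
  [SeminormedAddCommGroup E] [NormedSpace 𝕜 E] [SeminormedAddCommGroup F] [NormedSpace 𝕜 F]
  [SeminormedAddCommGroup G] [NormedSpace 𝕜 G] [SeminormedAddCommGroup H] [NormedSpace 𝕜 H]

theorem opNorm_mul_le_of_forall_le (T : E →L[𝕜] F) {a C : ℝ} (ha : 0 ≤ a) (hC : 0 ≤ C)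
    (h : ∀ x, ‖T x‖ * a ≤ C * ‖x‖) : ‖T‖ * a ≤ C := by
  rcases ha.eq_or_lt with rfl | ha
  · simpa using hC
  rw [← le_div_iff₀ ha]
  refine opNorm_le_bound _ (div_nonneg hC ha.le) fun x => ?_
  rw [div_mul_eq_mul_div, le_div_iff₀ ha]
  exact h x

theorem opNorm_mul_opNorm_le_of_forall_le (T : E →L[𝕜] F) (S : G →L[𝕜] H) {C : ℝ} (hC : 0 ≤ C)
    (h : ∀ x y, ‖T x‖ * ‖S y‖ ≤ C * (‖x‖ * ‖y‖)) : ‖T‖ * ‖S‖ ≤ C := by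
  rw [mul_comm]
  refine S.opNorm_mul_le_of_forall_le (norm_nonneg T) hC fun y => ?_
  rw [mul_comm]
  exact T.opNorm_mul_le_of_forall_le (norm_nonneg _) (by positivity) fun x => by
    linarith [h x y, mul_left_comm C ‖x‖ ‖y‖]

theorem opNorm_le_of_apply_eq_comp_comp (S : G →L[𝕜] H) (T : E →L[𝕜] F)
    (α : (F →L[𝕜] G) →L[𝕜] (E →L[𝕜] H)) (hα : ∀ a, α a = S.comp (a.comp T)) :
    ‖α‖ ≤ ‖S‖ * ‖T‖ := by
  refine opNorm_le_bound _ (by positivity) fun a => ?_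
  calc ‖α a‖ = ‖S.comp (a.comp T)‖ := by rw [hα]
    _ ≤ ‖S‖ * (‖a‖ * ‖T‖) := (opNorm_comp_le _ _).trans (by gcongr; exact opNorm_comp_le _ _)
    _ = ‖S‖ * ‖T‖ * ‖a‖ := by ring

end

variable {𝕜 E F G H : Type*} [RCLike 𝕜]
  [SeminormedAddCommGroup E] [NormedSpace 𝕜 E] [SeminormedAddCommGroup F] [NormedSpace 𝕜 F]
  [SeminormedAddCommGroup G] [NormedSpace 𝕜 G] [SeminormedAddCommGroup H] [NormedSpace 𝕜 H]

theorem opNorm_mul_opNorm_le_of_apply_eq_comp_comp (S : G →L[𝕜] H) (T : E →L[𝕜] F)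
    (α : (F →L[𝕜] G) →L[𝕜] (E →L[𝕜] H)) (hα : ∀ a, α a = S.comp (a.comp T)) :
    ‖T‖ * ‖S‖ ≤ ‖α‖ := by
  refine opNorm_mul_opNorm_le_of_forall_le T S (norm_nonneg α) fun x y => ?_
  obtain ⟨f, hf_norm, hf_apply⟩ := exists_dual_vector'' 𝕜 (T x)
  have hα_rank_one : α (smulRight f y) x = f (T x) • S y := by simp [hα]
  calc ‖T x‖ * ‖S y‖ = ‖α (smulRight f y) x‖ := by simp [hα_rank_one, hf_apply, norm_smul]
    _ ≤ ‖α‖ * (‖f‖ * ‖y‖) * ‖x‖ := by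
        grw [le_opNorm, le_opNorm, norm_smulRight_apply]
    _ ≤ ‖α‖ * (‖x‖ * ‖y‖) := by
        grw [hf_norm]
        linarith

theorem opNorm_eq_of_apply_eq_comp_comp (S : G →L[𝕜] H) (T : E →L[𝕜] F)
    (α : (F →L[𝕜] G) →L[𝕜] (E →L[𝕜] H)) (hα : ∀ a, α a = S.comp (a.comp T)) :
    ‖α‖ = ‖S‖ * ‖T‖ :=
  (opNorm_le_of_apply_eq_comp_comp S T α hα).antisymm
    (mul_comm ‖S‖ ‖T‖ ▸ opNorm_mul_opNorm_le_of_apply_eq_comp_comp S T α hα)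

end ContinuousLinearMap

theorem stmt_1_general (E : Type*) [NormedAddCommGroup E] [NormedSpace ℂ E]
    (s : E ≃L[ℂ] E) (α : (E →L[ℂ] E) →L[ℂ] (E →L[ℂ] E))
    (hα : ∀ a : E →L[ℂ] E,
      α a = (s : E →L[ℂ] E).comp (a.comp (s.symm : E →L[ℂ] E))) :
    ‖α‖ = ‖(s : E →L[ℂ] E)‖ * ‖(s.symm : E →L[ℂ] E)‖ :=
  ContinuousLinearMap.opNorm_eq_of_apply_eq_comp_comp _ _ α hα

/-- Lemma 3.3: the norm of the conjugation map `a ↦ s a s⁻¹` on `L(E)`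
equals `‖s‖ · ‖s⁻¹‖`. -/
theorem stmt_1 (E : Type*) [NormedAddCommGroup E] [NormedSpace ℂ E] [CompleteSpace E]
    (s : E ≃L[ℂ] E) (α : (E →L[ℂ] E) →L[ℂ] (E →L[ℂ] E))
    (hα : ∀ a : E →L[ℂ] E,
      α a = (s : E →L[ℂ] E).comp (a.comp (s.symm : E →L[ℂ] E))) :
    ‖α‖ = ‖(s : E →L[ℂ] E)‖ * ‖(s.symm : E →L[ℂ] E)‖ :=
  stmt_1_general E s α hα
end

section
/- Let d be a positive integer, let α_1, …, α_d be nonzero complex numbers, and set β = min_j |α_j| and γ = max_j |α_j|. Let E be a normed vector space and ξ_1, …, ξ_d ∈ E with ‖∑_{j=1}^d ξ_j‖ = 1. Then there exist complex numbers ζ_1, …, ζ_d of modulus 1 and an index j₀ ∈ {1, …, d} such that either ‖∑_{k=1}^d (ζ_{j₀} α_{j₀})(ζ_k α_k)⁻¹ ξ_k‖ ≥ β^{−1/2} γ^{1/2} or ‖∑_{k=1}^d (ζ_{j₀} α_{j₀})⁻¹(ζ_k α_k) ξ_k‖ ≥ β^{−1/2} γ^{1/2}. -/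
/-!
Take a norm-one functional `f` with `f (∑ ξ_k) = 1` and put `z_k = f ξ_k`, so that
`∑ |z_k| ≥ 1`. Choosing `ζ_k` so that `ζ_k α_k` has the phase of `z_k` (resp. of its conjugate)
lines up all the terms of `∑ (ζ_{j₀} α_{j₀}) (ζ_k α_k)⁻¹ z_k` (resp. of
`∑ (ζ_{j₀} α_{j₀})⁻¹ (ζ_k α_k) z_k`), so these have modulus `γ ∑ |z_k| / |α_k|` for `|α_{j₀}| = γ`
(resp. `β⁻¹ ∑ |α_k| |z_k|` for `|α_{j₀}| = β`). Their sum is `∑ |z_k| (γ / |α_k| + |α_k| / β)`,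
which is at least `2 √(γ / β)` by AM-GM, so one of them is at least `√(γ / β)`; since `‖f‖ = 1`,
so is the corresponding norm in `E`.
-/

theorem Real.rpow_neg_half_mul_rpow_half {β : ℝ} (hβ : 0 ≤ β) (γ : ℝ) :
    β ^ (-(1 : ℝ) / 2) * γ ^ ((1 : ℝ) / 2) = √(γ / β) := by
  rw [neg_div, Real.rpow_neg hβ, ← Real.sqrt_eq_rpow, ← Real.sqrt_eq_rpow,
    Real.sqrt_div' γ hβ, inv_mul_eq_div]

theorem two_mul_sqrt_div_le_div_add_div {β γ t : ℝ} (hβ : 0 ≤ β) (hγ : 0 ≤ γ) (ht : 0 < t) :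
    2 * √(γ / β) ≤ γ / t + t / β := by
  have hsplit : √(γ / β) = √(γ / t) * √(t / β) := by
    rw [← Real.sqrt_mul (by positivity)]
    congr 1
    field_simp
  rw [hsplit, ← mul_assoc]
  have := two_mul_le_add_sq (√(γ / t)) (√(t / β))
  rwa [Real.sq_sqrt (by positivity), Real.sq_sqrt (by positivity)] at this

theorem sqrt_div_le_or_le_of_one_le_sum {ι : Type*} [Fintype ι] {β γ : ℝ} {t w : ι → ℝ}
    (hβ : 0 ≤ β) (hγ : 0 ≤ γ) (ht : ∀ k, 0 < t k) (hw : ∀ k, 0 ≤ w k) (hw1 : 1 ≤ ∑ k, w k) :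
    √(γ / β) ≤ γ * ∑ k, w k / t k ∨ √(γ / β) ≤ β⁻¹ * ∑ k, t k * w k := by
  have htwo : 2 * √(γ / β) ≤ γ * ∑ k, w k / t k + β⁻¹ * ∑ k, t k * w k :=
    calc 2 * √(γ / β) ≤ ∑ k, w k * (2 * √(γ / β)) := by
          rw [← Finset.sum_mul]; nlinarith [Real.sqrt_nonneg (γ / β)]
      _ ≤ ∑ k, w k * (γ / t k + t k / β) := by
          gcongr with k
          · exact hw k
          · exact two_mul_sqrt_div_le_div_add_div hβ hγ (ht k)
      _ = γ * ∑ k, w k / t k + β⁻¹ * ∑ k, t k * w k := by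
          rw [Finset.mul_sum, Finset.mul_sum, ← Finset.sum_add_distrib]
          congr 1 with k
          ring
  by_contra! h
  linarith [h.1, h.2]

theorem exists_dual_coeffs_of_norm_sum_eq_one {𝕜 E ι : Type*} [RCLike 𝕜] [NormedAddCommGroup E]
    [NormedSpace 𝕜 E] [Fintype ι] {ξ : ι → E} (hξ : ‖∑ k, ξ k‖ = 1) :
    ∃ z : ι → 𝕜, ∑ k, z k = 1 ∧ ∀ c : ι → 𝕜, ‖∑ k, c k * z k‖ ≤ ‖∑ k, c k • ξ k‖ := by
  obtain ⟨f, hf, hfξ⟩ := exists_dual_vector 𝕜 (∑ k, ξ k) (by simp [hξ])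
  refine ⟨fun k => f (ξ k), by rw [← map_sum, hfξ, hξ, RCLike.ofReal_one], fun c => ?_⟩
  calc ‖∑ k, c k * f (ξ k)‖ = ‖f (∑ k, c k • ξ k)‖ := by simp [map_sum]
    _ ≤ ‖∑ k, c k • ξ k‖ := by simpa [hf] using f.le_opNorm (∑ k, c k • ξ k)

namespace Complex

theorem exp_sub_arg_mul_I_mul (a : ℂ) (θ : ℝ) :
    exp (↑(θ - arg a) * I) * a = ‖a‖ * exp (θ * I) := by
  calc exp (↑(θ - arg a) * I) * a = exp (↑(θ - arg a) * I) * (‖a‖ * exp (arg a * I)) := by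
        rw [norm_mul_exp_arg_mul_I]
    _ = ‖a‖ * exp (θ * I) := by
        rw [mul_left_comm, ← Complex.exp_add]
        push_cast
        ring_nf

variable {ι : Type*} [Fintype ι]

theorem exists_unimodular_norm_sum_mul_mul_inv_mul (α z : ι → ℂ) :
    ∃ ζ : ι → ℂ, (∀ k, ‖ζ k‖ = 1) ∧
      ∀ j, ‖∑ k, (ζ j * α j) * (ζ k * α k)⁻¹ * z k‖ = ‖α j‖ * ∑ k, ‖z k‖ / ‖α k‖ := by
  refine ⟨fun k => exp (↑(arg (z k) - arg (α k)) * I), fun k => norm_exp_ofReal_mul_I _,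
    fun j => ?_⟩
  have hterm (k : ι) : (exp (↑(arg (z k) - arg (α k)) * I) * α k)⁻¹ * z k =
      ↑(‖z k‖ / ‖α k‖) := by
    rw [exp_sub_arg_mul_I_mul]
    nth_rw 2 [← norm_mul_exp_arg_mul_I (z k)]
    rw [mul_inv, mul_mul_mul_comm, inv_mul_cancel₀ (exp_ne_zero _), mul_one]
    push_cast
    ring
  rw [Finset.sum_congr rfl fun k _ => by rw [mul_assoc, hterm]]
  simp_rw [← Finset.mul_sum, ← ofReal_sum, norm_mul,
    norm_exp_ofReal_mul_I, one_mul, norm_real,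
    Real.norm_of_nonneg (Finset.sum_nonneg fun k _ => div_nonneg (norm_nonneg (z k))
      (norm_nonneg (α k)))]

theorem exists_unimodular_norm_sum_inv_mul_mul_mul (α z : ι → ℂ) :
    ∃ ζ : ι → ℂ, (∀ k, ‖ζ k‖ = 1) ∧
      ∀ j, ‖∑ k, (ζ j * α j)⁻¹ * (ζ k * α k) * z k‖ = ‖α j‖⁻¹ * ∑ k, ‖α k‖ * ‖z k‖ := by
  refine ⟨fun k => exp (↑(-arg (z k) - arg (α k)) * I), fun k => norm_exp_ofReal_mul_I _,
    fun j => ?_⟩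
  have hterm (k : ι) : exp (↑(-arg (z k) - arg (α k)) * I) * α k * z k =
      ↑(‖α k‖ * ‖z k‖) := by
    rw [exp_sub_arg_mul_I_mul]
    nth_rw 2 [← norm_mul_exp_arg_mul_I (z k)]
    rw [mul_mul_mul_comm, ← Complex.exp_add]
    push_cast
    ring_nf
    rw [Complex.exp_zero, mul_one]
  rw [Finset.sum_congr rfl fun k _ => by rw [mul_assoc, hterm]]
  simp_rw [← Finset.mul_sum, ← ofReal_sum, norm_mul, norm_inv,
    norm_mul, norm_exp_ofReal_mul_I, one_mul, norm_real,
    Real.norm_of_nonneg (Finset.sum_nonneg fun k _ => mul_nonneg (norm_nonneg (α k))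
      (norm_nonneg (z k)))]

end Complex

theorem stmt_5_general (d : ℕ) (α : Fin d → ℂ) (hα : ∀ j, α j ≠ 0)
    (β γ : ℝ)
    (hβ : IsLeast (Set.range fun j => ‖α j‖) β)
    (hγ : IsGreatest (Set.range fun j => ‖α j‖) γ)
    (E : Type*) [NormedAddCommGroup E] [NormedSpace ℂ E]
    (ξ : Fin d → E) (hξ : ‖∑ j, ξ j‖ = 1) :
    ∃ (ζ : Fin d → ℂ) (j₀ : Fin d), (∀ j, ‖ζ j‖ = 1) ∧
      (β ^ (-(1 : ℝ) / 2) * γ ^ ((1 : ℝ) / 2) ≤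
          ‖∑ k, ((ζ j₀ * α j₀) * (ζ k * α k)⁻¹) • ξ k‖ ∨
        β ^ (-(1 : ℝ) / 2) * γ ^ ((1 : ℝ) / 2) ≤
          ‖∑ k, ((ζ j₀ * α j₀)⁻¹ * (ζ k * α k)) • ξ k‖) := by
  obtain ⟨jβ, rfl⟩ := hβ.1
  obtain ⟨jγ, rfl⟩ := hγ.1
  obtain ⟨z, hz_sum, hz_le⟩ := exists_dual_coeffs_of_norm_sum_eq_one (𝕜 := ℂ) hξ
  have hz_norm : 1 ≤ ∑ k, ‖z k‖ := by simpa [hz_sum] using norm_sum_le Finset.univ z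
  rw [Real.rpow_neg_half_mul_rpow_half (norm_nonneg _)]
  rcases sqrt_div_le_or_le_of_one_le_sum (norm_nonneg (α jβ)) (norm_nonneg (α jγ))
    (fun k => norm_pos_iff.mpr (hα k)) (fun k => norm_nonneg (z k)) hz_norm with h | h
  · obtain ⟨ζ, hζ, hnorm⟩ := Complex.exists_unimodular_norm_sum_mul_mul_inv_mul α z
    exact ⟨ζ, jγ, hζ, Or.inl (h.trans ((hnorm jγ).symm.trans_le (hz_le _)))⟩
  · obtain ⟨ζ, hζ, hnorm⟩ := Complex.exists_unimodular_norm_sum_inv_mul_mul_mul α z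
    exact ⟨ζ, jβ, hζ, Or.inr (h.trans ((hnorm jβ).symm.trans_le (hz_le _)))⟩

/-- Lemma 5.9: given nonzero scalars `α_j` with minimal modulus `β` and maximal modulus `γ`,
and vectors `ξ_j` with `‖∑ ξ_j‖ = 1`, there are unimodular scalars `ζ_j` and an index `j₀`
such that one of the two rescaled sums has norm at least `β^{-1/2} γ^{1/2}`. -/
theorem stmt_5 (d : ℕ) (hd : 0 < d) (α : Fin d → ℂ) (hα : ∀ j, α j ≠ 0)
    (β γ : ℝ)
    (hβ : IsLeast (Set.range fun j => ‖α j‖) β)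
    (hγ : IsGreatest (Set.range fun j => ‖α j‖) γ)
    (E : Type*) [NormedAddCommGroup E] [NormedSpace ℂ E]
    (ξ : Fin d → E) (hξ : ‖∑ j, ξ j‖ = 1) :
    ∃ (ζ : Fin d → ℂ) (j₀ : Fin d), (∀ j, ‖ζ j‖ = 1) ∧
      (β ^ (-(1 : ℝ) / 2) * γ ^ ((1 : ℝ) / 2) ≤
          ‖∑ k, ((ζ j₀ * α j₀) * (ζ k * α k)⁻¹) • ξ k‖ ∨
        β ^ (-(1 : ℝ) / 2) * γ ^ ((1 : ℝ) / 2) ≤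
          ‖∑ k, ((ζ j₀ * α j₀)⁻¹ * (ζ k * α k)) • ξ k‖) :=
  stmt_5_general d α hα β γ hβ hγ E ξ hξ
end

section
/- Let A be a unital Banach algebra, let d ∈ ℤ_{>0}, equip M_d with an algebra norm, and let B = M_d ⊗ A with any algebra tensor norm. Suppose z ∈ B ⊗̂ B satisfies Δ_B(z) = 1 and (x ⊗ 1_A ⊗ 1_B) z = z (1_B ⊗ x ⊗ 1_A) for all x ∈ M_d. Then there exist elements z_{j,k} ∈ A ⊗̂ A for j, k = 1, …, d such that z = ∑_{j,k,l=1}^d e_{j,k} ⊗ e_{l,j} ⊗ z_{l,k} (under the canonical identification B ⊗̂ B ≅ M_d ⊗ M_d ⊗ (A ⊗̂ A)) and ∑_{j=1}^d Δ_A(z_{j,j}) = 1. -/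
/-!
Expand `z = ∑ (e_{ij} ⊗ e_{kl}) ⊗ z_{ijkl}`. Comparing coefficients of `(e_{oi} ⊗ 1) ⊗ 1 * z` and
`z * (1 ⊗ e_{oi}) ⊗ 1` at `(o, j, k, l)` gives `z_{ijkl} = δ_{il} z_{ojko}`, which is the claimed
shape of `z`. Since `e_{jk} e_{lj} = δ_{kl} e_{jj}`, the multiplication map then sends `z` to
`1 ⊗ ∑_k Δ_A(z_{kk})`, and `a ↦ 1 ⊗ a` is injective because `M_d` has the entry functionals.
-/

open TensorProduct

namespace Matrix

variable {R : Type*} [CommSemiring R] {n : Type*} {M : Type*} [AddCommMonoid M] [Module R M]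

variable (R M) in
noncomputable def tensorCoeff (i j k l : n) : (Matrix n n R ⊗[R] Matrix n n R) ⊗[R] M →ₗ[R] M :=
  TensorProduct.lid R M ∘ₗ (LinearMap.mul' R R ∘ₗ
    TensorProduct.map (entryLinearMap R R i j) (entryLinearMap R R k l)).rTensor M

@[simp]
lemma tensorCoeff_tmul (i j k l : n) (x y : Matrix n n R) (c : M) :
    tensorCoeff R M i j k l ((x ⊗ₜ y) ⊗ₜ c) = (x i j * y k l) • c := by
  simp [tensorCoeff]

variable [DecidableEq n]

lemma single_eq_smul_single_one (i j : n) (a : R) : single i j a = a • single i j 1 := by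
  rw [smul_single, smul_eq_mul, mul_one]

variable [Fintype n]

lemma eq_sum_tensorCoeff (v : (Matrix n n R ⊗[R] Matrix n n R) ⊗[R] M) :
    v = ∑ i, ∑ j, ∑ k, ∑ l,
      (single i j (1 : R) ⊗ₜ single k l 1) ⊗ₜ tensorCoeff R M i j k l v := by
  suffices h : LinearMap.id = ∑ i : n, ∑ j : n, ∑ k : n, ∑ l : n,
      TensorProduct.mk R _ M (single i j (1 : R) ⊗ₜ single k l 1) ∘ₗ tensorCoeff R M i j k l by
    simpa using congr($h v)
  refine ext_threefold fun x y c => ?_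
  conv_lhs => rw [matrix_eq_sum_single x, matrix_eq_sum_single y]
  simp only [single_eq_smul_single_one _ _ (x _ _), single_eq_smul_single_one _ _ (y _ _),
    sum_tmul]
  simp only [tmul_sum, sum_tmul, smul_tmul', tmul_smul, smul_smul, LinearMap.id_apply,
    LinearMap.sum_apply, LinearMap.comp_apply, tensorCoeff_tmul, mk_apply, mul_comm]

lemma map_mul'_sum_single_tmul_single {N : Type*} [AddCommMonoid N] [Module R N]
    (f : M →ₗ[R] N) (c : n → n → M) :
    TensorProduct.map (LinearMap.mul' R (Matrix n n R)) f
        (∑ j, ∑ k, ∑ l, (single j k (1 : R) ⊗ₜ single l j 1) ⊗ₜ c l k) =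
      1 ⊗ₜ ∑ k, f (c k k) := by
  have hcollapse : ∀ j k, ∑ l, (single j k (1 : R) * single l j 1) ⊗ₜ[R] f (c l k) =
      single j j 1 ⊗ₜ f (c k k) := fun j k => by
    rw [Finset.sum_eq_single k, single_mul_single_same, mul_one]
    · intro l _ hlk
      rw [single_mul_single_of_ne (h := hlk.symm), zero_tmul]
    · simp
  simp only [map_sum, map_tmul, LinearMap.mul'_apply, hcollapse, ← tmul_sum, ← sum_tmul,
    sum_single_one]

omit [Fintype n] in
lemma one_tmul_injective [Nonempty n] :
    Function.Injective ((1 : Matrix n n R) ⊗ₜ[R] · : M → Matrix n n R ⊗[R] M) := by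
  obtain ⟨o⟩ := ‹Nonempty n›
  refine Function.LeftInverse.injective
    (g := TensorProduct.lid R M ∘ₗ (entryLinearMap R R o o).rTensor M) fun m => ?_
  simp

variable {C : Type*} [Semiring C] [Algebra R C]

lemma tensorCoeff_tmul_one_mul (x : Matrix n n R) (v : (Matrix n n R ⊗[R] Matrix n n R) ⊗[R] C)
    (i j k l : n) :
    tensorCoeff R C i j k l (((x ⊗ₜ 1) ⊗ₜ 1) * v) = ∑ q, x i q • tensorCoeff R C q j k l v := by
  suffices h : tensorCoeff R C i j k l ∘ₗ
      LinearMap.mulLeft R ((x ⊗ₜ[R] (1 : Matrix n n R)) ⊗ₜ[R] (1 : C)) =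
      ∑ q, x i q • tensorCoeff R C q j k l by
    simpa using congr($h v)
  refine ext_threefold fun y₁ y₂ c => ?_
  simp [mul_apply, Finset.sum_mul, Finset.sum_smul, smul_smul, mul_assoc]

lemma tensorCoeff_mul_one_tmul (x : Matrix n n R) (v : (Matrix n n R ⊗[R] Matrix n n R) ⊗[R] C)
    (i j k l : n) :
    tensorCoeff R C i j k l (v * ((1 ⊗ₜ x) ⊗ₜ 1)) = ∑ q, x q l • tensorCoeff R C i j k q v := by
  suffices h : tensorCoeff R C i j k l ∘ₗ
      LinearMap.mulRight R (((1 : Matrix n n R) ⊗ₜ[R] x) ⊗ₜ[R] (1 : C)) =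
      ∑ q, x q l • tensorCoeff R C i j k q by
    simpa using congr($h v)
  refine ext_threefold fun y₁ y₂ c => ?_
  simp [mul_apply, Finset.mul_sum, Finset.sum_smul, smul_smul, mul_comm, mul_left_comm]

lemma tensorCoeff_eq_ite_of_commute {v : (Matrix n n R ⊗[R] Matrix n n R) ⊗[R] C}
    (hv : ∀ x : Matrix n n R, ((x ⊗ₜ 1) ⊗ₜ 1) * v = v * ((1 ⊗ₜ x) ⊗ₜ 1)) (o i j k l : n) :
    tensorCoeff R C i j k l v = if i = l then tensorCoeff R C o j k o v else 0 := by
  have h := congr(tensorCoeff R C o j k l $(hv (single o i 1)))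
  simpa [tensorCoeff_tmul_one_mul, tensorCoeff_mul_one_tmul, single_apply, ite_and] using h

lemma eq_sum_single_tmul_single_of_commute {v : (Matrix n n R ⊗[R] Matrix n n R) ⊗[R] C}
    (hv : ∀ x : Matrix n n R, ((x ⊗ₜ 1) ⊗ₜ 1) * v = v * ((1 ⊗ₜ x) ⊗ₜ 1)) (o : n) :
    v = ∑ j, ∑ k, ∑ l, (single j k (1 : R) ⊗ₜ single l j 1) ⊗ₜ tensorCoeff R C o k l o v := by
  conv_lhs => rw [eq_sum_tensorCoeff v]
  refine Finset.sum_congr rfl fun i _ => Finset.sum_congr rfl fun j _ =>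
    Finset.sum_congr rfl fun k _ => ?_
  rw [Finset.sum_eq_single i, tensorCoeff_eq_ite_of_commute hv o i j k i, if_pos rfl]
  · intro l _ hil
    rw [tensorCoeff_eq_ite_of_commute hv o, if_neg hil.symm, tmul_zero]
  · simp

end Matrix

theorem stmt_13_general (d : ℕ) (hd : 0 < d)
    (A : Type*) [NormedRing A] [NormedAlgebra ℂ A]
    (C : Type*) [NormedRing C] [NormedAlgebra ℂ C]
    (ΔA : C →ₗ[ℂ] A)
    (z : TensorProduct ℂ
      (TensorProduct ℂ (Matrix (Fin d) (Fin d) ℂ) (Matrix (Fin d) (Fin d) ℂ)) C)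
    (ΔB : TensorProduct ℂ
        (TensorProduct ℂ (Matrix (Fin d) (Fin d) ℂ) (Matrix (Fin d) (Fin d) ℂ)) C →ₗ[ℂ]
      TensorProduct ℂ (Matrix (Fin d) (Fin d) ℂ) A)
    (hΔB : ∀ (x₁ x₂ : Matrix (Fin d) (Fin d) ℂ) (c : C),
      ΔB ((x₁ ⊗ₜ[ℂ] x₂) ⊗ₜ[ℂ] c) = (x₁ * x₂) ⊗ₜ[ℂ] ΔA c)
    (hΔBz : ΔB z = 1)
    (hz : ∀ x : Matrix (Fin d) (Fin d) ℂ,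
      ((x ⊗ₜ[ℂ] (1 : Matrix (Fin d) (Fin d) ℂ)) ⊗ₜ[ℂ] (1 : C)) * z =
        z * (((1 : Matrix (Fin d) (Fin d) ℂ) ⊗ₜ[ℂ] x) ⊗ₜ[ℂ] (1 : C))) :
    ∃ zc : Fin d → Fin d → C,
      z = ∑ j : Fin d, ∑ k : Fin d, ∑ l : Fin d,
        ((Matrix.single j k (1 : ℂ)) ⊗ₜ[ℂ] (Matrix.single l j (1 : ℂ)))
          ⊗ₜ[ℂ] zc l k ∧
      ∑ j : Fin d, ΔA (zc j j) = 1 := by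
  let o : Fin d := ⟨0, hd⟩
  have : Nonempty (Fin d) := ⟨o⟩
  let zc : Fin d → Fin d → C := fun l k => Matrix.tensorCoeff ℂ C o k l o z
  have hz_eq : z = ∑ j, ∑ k, ∑ l, (Matrix.single j k (1 : ℂ) ⊗ₜ Matrix.single l j 1) ⊗ₜ zc l k :=
    Matrix.eq_sum_single_tmul_single_of_commute hz o
  have hΔB_eq : ΔB = TensorProduct.map (LinearMap.mul' ℂ _) ΔA :=
    ext_threefold fun x₁ x₂ c => by simp [hΔB]
  refine ⟨zc, hz_eq, Matrix.one_tmul_injective (R := ℂ) (n := Fin d) ?_⟩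
  dsimp only
  rw [← Matrix.map_mul'_sum_single_tmul_single ΔA zc, ← hΔB_eq, ← hz_eq, hΔBz,
    Algebra.TensorProduct.one_def]

/-- Lemma 5.3: let `B = M_d ⊗ A`, and identify `B ⊗̂ B` with `M_d ⊗ M_d ⊗ (A ⊗̂ A)`
(the Banach algebra `A ⊗̂ A` is modelled abstractly by a Banach algebra `C`, with
`Δ_A : C → A` the induced multiplication map and `Δ_B` the multiplication map of `B`,
determined by `Δ_B((x₁ ⊗ x₂) ⊗ c) = (x₁ x₂) ⊗ Δ_A(c)`).  If `z` satisfies `Δ_B(z) = 1`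
and `(x ⊗ 1_A ⊗ 1_B) z = z (1_B ⊗ x ⊗ 1_A)` for all `x ∈ M_d`, then there are
`z_{j,k} ∈ A ⊗̂ A` with `z = ∑_{j,k,l} e_{j,k} ⊗ e_{l,j} ⊗ z_{l,k}` and
`∑_j Δ_A(z_{j,j}) = 1`. -/
theorem stmt_13 (d : ℕ) (hd : 0 < d)
    (A : Type*) [NormedRing A] [NormedAlgebra ℂ A] [CompleteSpace A]
    (C : Type*) [NormedRing C] [NormedAlgebra ℂ C] [CompleteSpace C]
    (ΔA : C →ₗ[ℂ] A)
    (z : TensorProduct ℂ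
      (TensorProduct ℂ (Matrix (Fin d) (Fin d) ℂ) (Matrix (Fin d) (Fin d) ℂ)) C)
    (ΔB : TensorProduct ℂ
        (TensorProduct ℂ (Matrix (Fin d) (Fin d) ℂ) (Matrix (Fin d) (Fin d) ℂ)) C →ₗ[ℂ]
      TensorProduct ℂ (Matrix (Fin d) (Fin d) ℂ) A)
    (hΔB : ∀ (x₁ x₂ : Matrix (Fin d) (Fin d) ℂ) (c : C),
      ΔB ((x₁ ⊗ₜ[ℂ] x₂) ⊗ₜ[ℂ] c) = (x₁ * x₂) ⊗ₜ[ℂ] ΔA c)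
    (hΔBz : ΔB z = 1)
    (hz : ∀ x : Matrix (Fin d) (Fin d) ℂ,
      ((x ⊗ₜ[ℂ] (1 : Matrix (Fin d) (Fin d) ℂ)) ⊗ₜ[ℂ] (1 : C)) * z =
        z * (((1 : Matrix (Fin d) (Fin d) ℂ) ⊗ₜ[ℂ] x) ⊗ₜ[ℂ] (1 : C))) :
    ∃ zc : Fin d → Fin d → C,
      z = ∑ j : Fin d, ∑ k : Fin d, ∑ l : Fin d,
        ((Matrix.single j k (1 : ℂ)) ⊗ₜ[ℂ] (Matrix.single l j (1 : ℂ)))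
          ⊗ₜ[ℂ] zc l k ∧
      ∑ j : Fin d, ΔA (zc j j) = 1 :=
  stmt_13_general d hd A C ΔA z ΔB hΔB hΔBz hz
end

section
/- Let M ≥ 1 and let B be a unital Banach algebra which has an approximate diagonal of norm at most M. Let G ⊂ inv(B) be a finite subgroup of the group of invertible elements. Then for every ε > 0 there exists z in the projective tensor product B ⊗̂ B such that ‖z‖_π < M + ε, Δ_B(z) = 1, and (g ⊗ 1) z = z (1 ⊗ g) for all g ∈ G. -/
/-! Correct an approximate diagonal `m` to `m₁ = m + (1 - Δ m) ⊗ 1`, so that `Δ m₁ = 1` exactly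
at the cost of a small perturbation, and average `(g⁻¹ ⊗ 1) m₁ (1 ⊗ g)` over the finite group
`G`. The average is exactly `G`-equivariant, still maps to `1` under `Δ`, and since
`(g⁻¹ ⊗ 1) m₁ (1 ⊗ g) - m₁ = ((g⁻¹ ⊗ 1) m₁ - m₁ (1 ⊗ g⁻¹)) (1 ⊗ g)`, it stays close to `m₁`
as soon as `m₁` almost commutes with the finitely many elements of `G`. -/

theorem inv_card_smul_sum_const {ι 𝕜 E : Type*} [Fintype ι] [Nonempty ι] [DivisionRing 𝕜]
    [CharZero 𝕜] [AddCommGroup E] [Module 𝕜 E] (x : E) :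
    (Fintype.card ι : 𝕜)⁻¹ • ∑ _i : ι, x = x := by
  rw [Finset.sum_const, Finset.card_univ, ← Nat.cast_smul_eq_nsmul 𝕜,
    inv_smul_smul₀ (Nat.cast_ne_zero.mpr Fintype.card_ne_zero)]

section TwistedAverage

variable {𝕜 B P : Type*} [RCLike 𝕜] [NormedRing B] [Module 𝕜 B] [NormedRing P]
  [NormedAlgebra 𝕜 P] (τ : B →ₗ[𝕜] B →ₗ[𝕜] P)

/-- `twist τ g m` is `(g⁻¹ ⊗ 1) m (1 ⊗ g)`. -/
def twist (g : Bˣ) (m : P) : P := τ ↑g⁻¹ 1 * m * τ 1 ↑g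

noncomputable def twistedAverage (G : Subgroup Bˣ) [Fintype G] (m : P) : P :=
  (Fintype.card G : 𝕜)⁻¹ • ∑ g : G, twist τ g m

theorem norm_twist_sub_le (hτn : ∀ a b : B, ‖τ a b‖ ≤ ‖a‖ * ‖b‖) (hτ1 : τ 1 1 = 1)
    (hτmul : ∀ a b c d : B, τ a b * τ c d = τ (a * c) (b * d)) (g : Bˣ) (m : P) :
    ‖twist τ g m - m‖ ≤ ‖τ ↑g⁻¹ 1 * m - m * τ 1 ↑g⁻¹‖ * (‖(1 : B)‖ * ‖(g : B)‖) := by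
  have hcancel : τ 1 ↑g⁻¹ * τ 1 ↑g = 1 := by rw [hτmul, one_mul, Units.inv_mul, hτ1]
  have hsplit : twist τ g m - m = (τ ↑g⁻¹ 1 * m - m * τ 1 ↑g⁻¹) * τ 1 ↑g := by
    rw [twist, sub_mul, mul_assoc m, hcancel, mul_one]
  rw [hsplit]
  exact (norm_mul_le _ _).trans (by gcongr; exact hτn 1 _)

theorem twist_mul_tensor_one (hτmul : ∀ a b c d : B, τ a b * τ c d = τ (a * c) (b * d))
    (g h : Bˣ) (m : P) : τ ↑h 1 * twist τ g m = twist τ (g * h⁻¹) m * τ 1 ↑h := by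
  have hleft : τ ↑h 1 * τ ↑g⁻¹ 1 = τ ↑(g * h⁻¹)⁻¹ 1 := by simp [hτmul]
  have hright : τ 1 ↑(g * h⁻¹) * τ 1 ↑h = τ 1 ↑g := by simp [hτmul, mul_assoc]
  simp only [twist, ← mul_assoc, hleft]
  rw [mul_assoc _ _ (τ 1 ↑h), hright]

variable {τ}

theorem tensor_one_mul_twistedAverage (hτmul : ∀ a b c d : B, τ a b * τ c d = τ (a * c) (b * d))
    (G : Subgroup Bˣ) [Fintype G] (m : P) {h : Bˣ} (hh : h ∈ G) :
    τ ↑h 1 * twistedAverage τ G m = twistedAverage τ G m * τ 1 ↑h := by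
  have hreindex : ∑ g : G, twist τ (↑g * h⁻¹) m = ∑ g : G, twist τ g m :=
    Fintype.sum_equiv (Equiv.mulRight ⟨h, hh⟩⁻¹) _ _ fun _ => rfl
  rw [twistedAverage, mul_smul_comm, smul_mul_assoc, Finset.mul_sum, Finset.sum_mul]
  simp only [twist_mul_tensor_one τ hτmul, ← Finset.sum_mul, hreindex]

theorem map_twistedAverage_eq_one {ΔB : P →L[𝕜] B}
    (hΔmod : ∀ (a b : B) (x : P), ΔB (τ a 1 * x * τ 1 b) = a * ΔB x * b)
    (G : Subgroup Bˣ) [Fintype G] {m : P} (hm : ΔB m = 1) : ΔB (twistedAverage τ G m) = 1 := by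
  have htwist : ∀ g : G, ΔB (twist τ g m) = 1 := fun g => by
    rw [twist, hΔmod, hm, mul_one, Units.inv_mul]
  rw [twistedAverage, map_smul, map_sum, Finset.sum_congr rfl fun g _ => htwist g,
    inv_card_smul_sum_const]

theorem norm_twistedAverage_sub_le (G : Subgroup Bˣ) [Fintype G] {m : P} {η : ℝ}
    (hη : ∀ g : G, ‖twist τ g m - m‖ ≤ η) : ‖twistedAverage τ G m - m‖ ≤ η := by
  have hdiff : twistedAverage τ G m - m = (Fintype.card G : 𝕜)⁻¹ • ∑ g : G, (twist τ g m - m) := by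
    rw [Finset.sum_sub_distrib, smul_sub, inv_card_smul_sum_const, twistedAverage]
  calc ‖twistedAverage τ G m - m‖
      ≤ (Fintype.card G : ℝ)⁻¹ * ∑ g : G, ‖twist τ g m - m‖ := by
        rw [hdiff, norm_smul, norm_inv, RCLike.norm_natCast]
        gcongr
        exact norm_sum_le _ _
    _ ≤ (Fintype.card G : ℝ)⁻¹ * ∑ _g : G, η := by gcongr with g; exact hη g
    _ = η := by rw [← smul_eq_mul, inv_card_smul_sum_const]

end TwistedAverage

theorem exists_map_eq_one_near {𝕜 B P : Type*} [RCLike 𝕜] [NormedRing B] [Module 𝕜 B]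
    [NormedRing P] [Module 𝕜 P] {τ : B →ₗ[𝕜] B →ₗ[𝕜] P}
    (hτn : ∀ a b : B, ‖τ a b‖ ≤ ‖a‖ * ‖b‖)
    (hτmul : ∀ a b c d : B, τ a b * τ c d = τ (a * c) (b * d))
    {ΔB : P →L[𝕜] B} (hΔB : ∀ a b : B, ΔB (τ a b) = a * b) (m : P) :
    ∃ m₁ : P, ΔB m₁ = 1 ∧ ‖m₁‖ ≤ ‖m‖ + ‖(1 : B)‖ * ‖ΔB m - 1‖ ∧
      ∀ a : B, ‖τ a 1 * m₁ - m₁ * τ 1 a‖ ≤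
        ‖τ a 1 * m - m * τ 1 a‖ + (‖(1 : B)‖ + 1) * ‖a‖ * ‖ΔB m - 1‖ := by
  set e := 1 - ΔB m
  have he : ‖e‖ = ‖ΔB m - 1‖ := norm_sub_rev _ _
  refine ⟨m + τ e 1, by rw [map_add, hΔB, mul_one, add_sub_cancel], ?_, fun a => ?_⟩
  · calc ‖m + τ e 1‖ ≤ ‖m‖ + ‖e‖ * ‖(1 : B)‖ := (norm_add_le _ _).trans (by gcongr; exact hτn _ _)
      _ = ‖m‖ + ‖(1 : B)‖ * ‖ΔB m - 1‖ := by rw [he, mul_comm]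
  · have hsplit : τ a 1 * (m + τ e 1) - (m + τ e 1) * τ 1 a =
        (τ a 1 * m - m * τ 1 a) + (τ (a * e) 1 - τ e a) := by
      rw [mul_add, add_mul, hτmul, hτmul, mul_one, one_mul, mul_one]
      abel
    have hae : ‖τ (a * e) 1‖ ≤ ‖(1 : B)‖ * ‖a‖ * ‖e‖ :=
      (hτn _ _).trans (by rw [mul_comm, mul_assoc]; gcongr; exact norm_mul_le _ _)
    calc _ ≤ ‖τ a 1 * m - m * τ 1 a‖ + (‖τ (a * e) 1‖ + ‖τ e a‖) := by
          rw [hsplit]; exact (norm_add_le _ _).trans (by gcongr; exact norm_sub_le _ _)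
      _ ≤ ‖τ a 1 * m - m * τ 1 a‖ + (‖(1 : B)‖ * ‖a‖ * ‖e‖ + ‖e‖ * ‖a‖) := by
          gcongr; exact hτn _ _
      _ = _ := by rw [he]; ring

theorem exists_equivariant_map_eq_one_near {𝕜 B P : Type*} [RCLike 𝕜] [NormedRing B]
    [Module 𝕜 B] [NormedRing P] [NormedAlgebra 𝕜 P] {τ : B →ₗ[𝕜] B →ₗ[𝕜] P}
    (hτn : ∀ a b : B, ‖τ a b‖ ≤ ‖a‖ * ‖b‖) (hτ1 : τ 1 1 = 1)
    (hτmul : ∀ a b c d : B, τ a b * τ c d = τ (a * c) (b * d))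
    {ΔB : P →L[𝕜] B} (hΔB : ∀ a b : B, ΔB (τ a b) = a * b)
    (hΔmod : ∀ (a b : B) (x : P), ΔB (τ a 1 * x * τ 1 b) = a * ΔB x * b)
    (G : Subgroup Bˣ) [Fintype G] {R δ : ℝ} (hR : ∀ g : G, ‖((g : Bˣ) : B)‖ ≤ R) {m : P}
    (hmΔ : ‖ΔB m - 1‖ ≤ δ) (hmcomm : ∀ g : G, ‖τ ↑(g : Bˣ) 1 * m - m * τ 1 ↑(g : Bˣ)‖ ≤ δ) :
    ∃ z : P, ‖z‖ ≤ ‖m‖ + (‖(1 : B)‖ + (1 + (‖(1 : B)‖ + 1) * R) * (‖(1 : B)‖ * R)) * δ ∧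
      ΔB z = 1 ∧ ∀ g ∈ G, τ ↑g 1 * z = z * τ 1 ↑g := by
  obtain ⟨m₁, hm₁Δ, hm₁, hm₁comm⟩ := exists_map_eq_one_near hτn hτmul hΔB m
  have hR0 : 0 ≤ R := (norm_nonneg _).trans (hR 1)
  have htwist : ∀ g : G,
      ‖twist τ g m₁ - m₁‖ ≤ (1 + (‖(1 : B)‖ + 1) * R) * δ * (‖(1 : B)‖ * R) := fun g => by
    have hcomm : ‖τ ↑(g : Bˣ)⁻¹ 1 * m₁ - m₁ * τ 1 ↑(g : Bˣ)⁻¹‖ ≤ (1 + (‖(1 : B)‖ + 1) * R) * δ := by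
      have hcomm_m : ‖τ ↑(g : Bˣ)⁻¹ 1 * m - m * τ 1 ↑(g : Bˣ)⁻¹‖ ≤ δ := hmcomm g⁻¹
      have hinv : ‖(↑(g : Bˣ)⁻¹ : B)‖ ≤ R := hR g⁻¹
      calc _ ≤ δ + (‖(1 : B)‖ + 1) * R * δ := (hm₁comm _).trans (by gcongr)
        _ = _ := by ring
    exact (norm_twist_sub_le τ hτn hτ1 hτmul g m₁).trans <| mul_le_mul hcomm
      (mul_le_mul_of_nonneg_left (hR g) (norm_nonneg _)) (by positivity) ((norm_nonneg _).trans hcomm)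
  refine ⟨twistedAverage τ G m₁, ?_, map_twistedAverage_eq_one hΔmod G hm₁Δ,
    fun g hg => tensor_one_mul_twistedAverage hτmul G m₁ hg⟩
  calc ‖twistedAverage τ G m₁‖ ≤ ‖m₁‖ + ‖twistedAverage τ G m₁ - m₁‖ := norm_le_insert' _ _
    _ ≤ ‖m‖ + ‖(1 : B)‖ * δ + (1 + (‖(1 : B)‖ + 1) * R) * δ * (‖(1 : B)‖ * R) := by
        gcongr
        · exact hm₁.trans (by gcongr)
        · exact norm_twistedAverage_sub_le G htwist
    _ = _ := by ring

theorem stmt_14_general (B : Type*) [NormedRing B] [NormedAlgebra ℂ B]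
    (P : Type*) [NormedRing P] [NormedAlgebra ℂ P]
    (τ : B →ₗ[ℂ] B →ₗ[ℂ] P) (hτn : ∀ a b : B, ‖τ a b‖ ≤ ‖a‖ * ‖b‖)
    (hτ1 : τ 1 1 = 1)
    (hτmul : ∀ a b c d : B, τ a b * τ c d = τ (a * c) (b * d))
    (ΔB : P →L[ℂ] B) (hΔB : ∀ a b : B, ΔB (τ a b) = a * b)
    (hΔmod : ∀ (a b : B) (x : P), ΔB (τ a 1 * x * τ 1 b) = a * ΔB x * b)
    (M : ℝ)
    (happrox : ∀ ε > (0 : ℝ), ∀ S : Finset B, ∃ m : P, ‖m‖ ≤ M ∧ ‖ΔB m - 1‖ < ε ∧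
      ∀ a ∈ S, ‖τ a 1 * m - m * τ 1 a‖ < ε)
    (G : Subgroup Bˣ) (hG : (G : Set Bˣ).Finite) :
    ∀ ε > (0 : ℝ), ∃ z : P, ‖z‖ < M + ε ∧ ΔB z = 1 ∧
      ∀ g : Bˣ, g ∈ G → τ (g : B) 1 * z = z * τ 1 (g : B) := by
  classical
  intro ε hε
  have : Fintype G := hG.fintype
  obtain ⟨R, hR⟩ := Finite.exists_le fun g : G => ‖((g : Bˣ) : B)‖
  set C := ‖(1 : B)‖ + (1 + (‖(1 : B)‖ + 1) * R) * (‖(1 : B)‖ * R)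
  have hR0 : 0 ≤ R := (norm_nonneg _).trans (hR 1)
  have hC : 0 ≤ C := by positivity
  have hδ : 0 < ε / (C + 1) := by positivity
  obtain ⟨m, hmM, hmΔ, hmcomm⟩ :=
    happrox (ε / (C + 1)) hδ (Finset.univ.image fun g : G => ((g : Bˣ) : B))
  obtain ⟨z, hz, hzΔ, hzG⟩ := exists_equivariant_map_eq_one_near hτn hτ1 hτmul hΔB hΔmod G hR
    hmΔ.le fun g => (hmcomm _ (Finset.mem_image_of_mem _ (Finset.mem_univ g))).le
  refine ⟨z, ?_, hzΔ, hzG⟩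
  calc ‖z‖ ≤ M + C * (ε / (C + 1)) := hz.trans (by gcongr)
    _ < M + ε := by
        have : C * (ε / (C + 1)) < ε := by
          rw [mul_div_assoc', div_lt_iff₀ (by positivity)]
          nlinarith
        linarith

/-- Lemma 5.1: if the unital Banach algebra `B` has an approximate diagonal with norm at
most `M` (in `B ⊗̂ B`, modelled abstractly by a Banach algebra `P` with a bilinear map
`τ` of norm `≤ 1` representing elementary tensors and `Δ_B` the induced multiplication
map), and `G` is a finite subgroup of the invertible group of `B`, then for every `ε > 0`
there is `z ∈ B ⊗̂ B` with `‖z‖ < M + ε`, `Δ_B(z) = 1`, and `(g ⊗ 1) z = z (1 ⊗ g)` for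
all `g ∈ G`. -/
theorem stmt_14 (B : Type*) [NormedRing B] [NormedAlgebra ℂ B] [CompleteSpace B]
    (P : Type*) [NormedRing P] [NormedAlgebra ℂ P] [CompleteSpace P]
    (τ : B →ₗ[ℂ] B →ₗ[ℂ] P) (hτn : ∀ a b : B, ‖τ a b‖ ≤ ‖a‖ * ‖b‖)
    (hτ1 : τ 1 1 = 1)
    (hτmul : ∀ a b c d : B, τ a b * τ c d = τ (a * c) (b * d))
    (ΔB : P →L[ℂ] B) (hΔBn : ‖ΔB‖ ≤ 1) (hΔB : ∀ a b : B, ΔB (τ a b) = a * b)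
    (hΔmod : ∀ (a b : B) (x : P), ΔB (τ a 1 * x * τ 1 b) = a * ΔB x * b)
    (M : ℝ) (hM : 1 ≤ M)
    (happrox : ∀ ε > (0 : ℝ), ∀ S : Finset B, ∃ m : P, ‖m‖ ≤ M ∧ ‖ΔB m - 1‖ < ε ∧
      ∀ a ∈ S, ‖τ a 1 * m - m * τ 1 a‖ < ε)
    (G : Subgroup Bˣ) (hG : (G : Set Bˣ).Finite) :
    ∀ ε > (0 : ℝ), ∃ z : P, ‖z‖ < M + ε ∧ ΔB z = 1 ∧
      ∀ g : Bˣ, g ∈ G → τ (g : B) 1 * z = z * τ 1 (g : B) :=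
  stmt_14_general B P τ hτn hτ1 hτmul ΔB hΔB hΔmod M happrox G hG
end
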